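/- arXiv:2307.02911 — 5 statements merged into one kernel-verified Lean document; each statement's English description precedes it below -/
import Mathlib

section
/- Let n ≥ 2 be a natural number, κ > 0 and p > 1 real numbers. Define f(a,b) = (p-1)·(2·a·b·κ·(n-1) − a^(p/(p-1)) − a·b²·p) for a, b > 0. Then for all a, b > 0, f(a,b) ≤ ((n-1)²·(p-1)·κ²/p²)^p, with equality when a = ((n-1)²(p-1)κ²/p²)^(p-1) and b = (n-1)κ/p. -/
/-- Optimization giving the sharp clamped-plate spectral gap constant. -/
theorem stmt_1 (n : ℕ) (hn : 2 ≤ n) (κ p : ℝ) (hκ : 0 < κ) (hp : 1 < p) :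
    (∀ a b : ℝ, 0 < a → 0 < b →
      (p - 1) * (2 * a * b * κ * ((n : ℝ) - 1) - a ^ (p / (p - 1)) - a * b ^ 2 * p)
        ≤ (((n : ℝ) - 1) ^ 2 * (p - 1) * κ ^ 2 / p ^ 2) ^ p) ∧
    (p - 1) * (2 * ((((n : ℝ) - 1) ^ 2 * (p - 1) * κ ^ 2 / p ^ 2) ^ (p - 1))
        * (((n : ℝ) - 1) * κ / p) * κ * ((n : ℝ) - 1)
      - ((((n : ℝ) - 1) ^ 2 * (p - 1) * κ ^ 2 / p ^ 2) ^ (p - 1)) ^ (p / (p - 1))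
      - ((((n : ℝ) - 1) ^ 2 * (p - 1) * κ ^ 2 / p ^ 2) ^ (p - 1))
        * (((n : ℝ) - 1) * κ / p) ^ 2 * p)
      = (((n : ℝ) - 1) ^ 2 * (p - 1) * κ ^ 2 / p ^ 2) ^ p := by
  have hn1 : (1 : ℝ) ≤ (n : ℝ) - 1 := by
    have : (2 : ℝ) ≤ (n : ℝ) := by exact_mod_cast hn
    linarith
  have hp0 : (0 : ℝ) < p := by linarith
  have hp1 : (0 : ℝ) < p - 1 := by linarith
  have hpne : p ≠ 0 := hp0.ne'
  have hpne1 : p - 1 ≠ 0 := hp1.ne'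
  set c : ℝ := ((n : ℝ) - 1) ^ 2 * (p - 1) * κ ^ 2 / p ^ 2 with hc_def
  have hc : 0 < c := by
    apply div_pos
    · positivity
    · positivity
  have hpq : p.HolderConjugate (p / (p - 1)) := Real.HolderConjugate.conjExponent hp
  have hcp : c ^ (p - 1) * c = c ^ p := by
    have h := Real.rpow_add hc (p - 1) 1
    have h2 : p - 1 + 1 = p := by ring
    rw [h2, Real.rpow_one] at h
    exact h.symm
  constructor
  · intro a b ha hb
    have hsq : 2 * a * b * κ * ((n : ℝ) - 1) - a * b ^ 2 * p
        ≤ a * (((n : ℝ) - 1) ^ 2 * κ ^ 2 / p) := by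
      rw [show a * (((n : ℝ) - 1) ^ 2 * κ ^ 2 / p)
          = a * (((n : ℝ) - 1) ^ 2 * κ ^ 2) / p by ring, le_div_iff₀ hp0]
      nlinarith [mul_nonneg ha.le (sq_nonneg (((n : ℝ) - 1) * κ - b * p))]
    have hstep1 : (p - 1) * (2 * a * b * κ * ((n : ℝ) - 1) - a ^ (p / (p - 1)) - a * b ^ 2 * p)
        ≤ p * c * a - (p - 1) * a ^ (p / (p - 1)) := by
      have hpc : p * c * a = (p - 1) * (a * (((n : ℝ) - 1) ^ 2 * κ ^ 2 / p)) := by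
        rw [hc_def]; field_simp
      rw [hpc]
      nlinarith [hsq, hp1]
    refine hstep1.trans ?_
    have hY := Real.young_inequality_of_nonneg hc.le ha.le hpq
    have hq1 : p / (p / (p - 1)) = p - 1 := hpq.div_conj_eq_sub_one
    have hkey : p * (c * a) ≤ c ^ p + (p - 1) * a ^ (p / (p - 1)) := by
      have h := mul_le_mul_of_nonneg_left hY hp0.le
      have hqne : p / (p - 1) ≠ 0 := hpq.symm.ne_zero
      calc p * (c * a) ≤ p * (c ^ p / p + a ^ (p / (p - 1)) / (p / (p - 1))) := h
        _ = c ^ p + (p / (p / (p - 1))) * a ^ (p / (p - 1)) := by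
            field_simp
        _ = c ^ p + (p - 1) * a ^ (p / (p - 1)) := by rw [hq1]
    nlinarith [hkey]
  · have hcc : (c ^ (p - 1)) ^ (p / (p - 1)) = c ^ p := by
      rw [← Real.rpow_mul hc.le]
      congr 1
      field_simp
    have t1 : (p - 1) * (c ^ (p - 1) * (((n : ℝ) - 1) * κ / p) * κ * ((n : ℝ) - 1))
        = c ^ p * p := by
      rw [← hcp, hc_def]
      field_simp
    have t3 : (p - 1) * (c ^ (p - 1) * ((((n : ℝ) - 1) * κ / p) ^ 2) * p) = c ^ p * p := by
      rw [← hcp, hc_def]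
      field_simp
    rw [hcc]
    linear_combination 2 * t1 - t3
end

section
/- Let n ≥ 2 a natural number, κ > 0, p > 1, and s = (n-1)κ/p. Define E₁(δ) = κ^{1-n}·(δ/2 − 2)·((1 − e^{-κδ − 2κ})/2)^{n-1} and, for constants M₁, M₂ ≥ 0, define E₂(δ) = M₁ + M₂ + s^{2p}·κ^{1-n}·(δ/2 − 2)·(p·coth((δ/2 + 1)κ) − 1)^p·((1 − e^{-2κ(δ−1)})/2)^{n-1}. Then lim_{δ→∞} E₂(δ)/E₁(δ) = s^{2p}·(p−1)^p = ((n−1)²(p−1)κ²/p²)^p. -/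
open Filter Real

noncomputable def coth (x : ℝ) : ℝ := Real.cosh x / Real.sinh x

lemma coth_eq (x : ℝ) (hx : 0 < x) :
    coth x = (1 + Real.exp (-2 * x)) / (1 - Real.exp (-2 * x)) := by
  have hs : Real.sinh x ≠ 0 := ne_of_gt (by positivity)
  have hex : Real.exp x ≠ 0 := Real.exp_ne_zero x
  have hne : 1 - Real.exp (-2 * x) ≠ 0 := by
    have : Real.exp (-2 * x) < 1 := by
      rw [Real.exp_lt_one_iff]; linarith
    linarith
  have h2 : Real.exp (-2 * x) = Real.exp (-x) ^ 2 := by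
    rw [← Real.exp_nat_mul]; norm_num
  rw [coth, Real.cosh_eq, Real.sinh_eq, div_eq_div_iff (by
    rw [Real.sinh_eq] at hs
    exact hs) hne, h2, Real.exp_neg]
  field_simp

lemma coth_tendsto : Tendsto coth atTop (nhds 1) := by
  have h1 : Tendsto (fun x : ℝ => -2 * x) atTop atBot :=
    Tendsto.const_mul_atTop_of_neg (by norm_num) tendsto_id
  have he : Tendsto (fun x : ℝ => Real.exp (-2 * x)) atTop (nhds 0) :=
    Real.tendsto_exp_atBot.comp h1
  have hnum : Tendsto (fun x : ℝ => 1 + Real.exp (-2 * x)) atTop (nhds (1 + 0)) :=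
    tendsto_const_nhds.add he
  have hden : Tendsto (fun x : ℝ => 1 - Real.exp (-2 * x)) atTop (nhds (1 - 0)) :=
    tendsto_const_nhds.sub he
  have hmain : Tendsto (fun x : ℝ => (1 + Real.exp (-2 * x)) / (1 - Real.exp (-2 * x)))
      atTop (nhds ((1 + 0) / (1 - 0))) := hnum.div hden (by norm_num)
  have : Tendsto (fun x : ℝ => (1 + Real.exp (-2 * x)) / (1 - Real.exp (-2 * x)))
      atTop (nhds 1) := by simpa using hmain
  refine this.congr' ?_
  filter_upwards [eventually_gt_atTop 0] with x hx
  exact (coth_eq x hx).symm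

/-- Sharpness limit for the clamped plate problem. -/
theorem stmt_7 (n : ℕ) (hn : 2 ≤ n) (κ p : ℝ) (hκ : 0 < κ) (hp : 1 < p)
    (s : ℝ) (hs : s = ((n : ℝ) - 1) * κ / p)
    (M₁ M₂ : ℝ) (hM₁ : 0 ≤ M₁) (hM₂ : 0 ≤ M₂)
    (E₁ E₂ : ℝ → ℝ)
    (hE₁ : ∀ δ, E₁ δ = κ ^ ((1 : ℝ) - n) * (δ / 2 - 2)
        * ((1 - Real.exp (-κ * δ - 2 * κ)) / 2) ^ (n - 1))
    (hE₂ : ∀ δ, E₂ δ = M₁ + M₂ + s ^ (2 * p) * κ ^ ((1 : ℝ) - n) * (δ / 2 - 2)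
        * (p * coth ((δ / 2 + 1) * κ) - 1) ^ p
        * ((1 - Real.exp (-2 * κ * (δ - 1))) / 2) ^ (n - 1)) :
    Filter.Tendsto (fun δ => E₂ δ / E₁ δ) Filter.atTop
        (nhds (s ^ (2 * p) * (p - 1) ^ p)) ∧
    s ^ (2 * p) * (p - 1) ^ p
      = (((n : ℝ) - 1) ^ 2 * (p - 1) * κ ^ 2 / p ^ 2) ^ p := by
  have hp0 : (0:ℝ) < p := by linarith
  have hn1 : (1:ℝ) ≤ (n:ℝ) - 1 := by
    have : (2:ℝ) ≤ (n:ℝ) := by exact_mod_cast hn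
    linarith
  have hs0 : 0 < s := by rw [hs]; positivity
  have hc0 : 0 < κ ^ ((1 : ℝ) - n) := Real.rpow_pos_of_pos hκ _
  -- limits of exponentials
  have hArg1 : Tendsto (fun δ : ℝ => -κ * δ - 2 * κ) atTop atBot := by
    apply tendsto_atBot_add_const_right
    exact Tendsto.const_mul_atTop_of_neg (by linarith) tendsto_id
  have hArg2 : Tendsto (fun δ : ℝ => -2 * κ * (δ - 1)) atTop atBot := by
    apply Tendsto.const_mul_atTop_of_neg (by linarith)
    exact tendsto_atTop_add_const_right _ _ tendsto_id
  have hAlim : Tendsto (fun δ : ℝ => (1 - Real.exp (-κ * δ - 2 * κ)) / 2) atTop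
      (nhds ((1 - 0)/2)) :=
    (tendsto_const_nhds.sub (Real.tendsto_exp_atBot.comp hArg1)).div_const 2
  have hBlim : Tendsto (fun δ : ℝ => (1 - Real.exp (-2 * κ * (δ - 1))) / 2) atTop
      (nhds ((1 - 0)/2)) :=
    (tendsto_const_nhds.sub (Real.tendsto_exp_atBot.comp hArg2)).div_const 2
  have hlin : Tendsto (fun δ : ℝ => (δ / 2 + 1) * κ) atTop atTop := by
    apply Tendsto.atTop_mul_const hκ
    exact tendsto_atTop_add_const_right _ _ ((tendsto_id (α := ℝ)).atTop_div_const (by norm_num))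
  have hClim : Tendsto (fun δ : ℝ => p * coth ((δ / 2 + 1) * κ) - 1) atTop
      (nhds (p * 1 - 1)) :=
    (tendsto_const_nhds.mul (coth_tendsto.comp hlin)).sub tendsto_const_nhds
  have hClim' : Tendsto (fun δ : ℝ => p * coth ((δ / 2 + 1) * κ) - 1) atTop
      (nhds (p - 1)) := by simpa using hClim
  -- E₁ → atTop
  have hd : Tendsto (fun δ : ℝ => δ / 2 - 2) atTop atTop := by
    apply tendsto_atTop_add_const_right
    exact (tendsto_id (α := ℝ)).atTop_div_const (by norm_num)
  have hE₁top : Tendsto E₁ atTop atTop := by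
    have hcA : Tendsto (fun δ : ℝ => κ ^ ((1 : ℝ) - n)
        * ((1 - Real.exp (-κ * δ - 2 * κ)) / 2) ^ (n - 1)) atTop
        (nhds (κ ^ ((1 : ℝ) - n) * ((1 - 0)/2) ^ (n - 1))) :=
      tendsto_const_nhds.mul (hAlim.pow (n - 1))
    have := hd.atTop_mul_pos (C := κ ^ ((1 : ℝ) - n) * ((1 - 0)/2) ^ (n - 1))
      (by positivity) hcA
    refine this.congr fun δ => ?_
    rw [hE₁]; ring
  -- eventual equality
  have hkey : ∀ᶠ δ in atTop, E₂ δ / E₁ δ =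
      (M₁ + M₂) / E₁ δ + s ^ (2 * p) * (p * coth ((δ / 2 + 1) * κ) - 1) ^ p
        * (((1 - Real.exp (-2 * κ * (δ - 1))) / 2)
          / ((1 - Real.exp (-κ * δ - 2 * κ)) / 2)) ^ (n - 1) := by
    filter_upwards [eventually_gt_atTop (5:ℝ)] with δ hδ
    have hApos : (0:ℝ) < (1 - Real.exp (-κ * δ - 2 * κ)) / 2 := by
      have : Real.exp (-κ * δ - 2 * κ) < 1 := by
        rw [Real.exp_lt_one_iff]; nlinarith
      linarith
    have hdpos : (0:ℝ) < δ / 2 - 2 := by linarith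
    have hDne : κ ^ ((1 : ℝ) - n) * (δ / 2 - 2)
        * ((1 - Real.exp (-κ * δ - 2 * κ)) / 2) ^ (n - 1) ≠ 0 := by positivity
    have hAne : ((1 - Real.exp (-κ * δ - 2 * κ)) / 2) ^ (n - 1) ≠ 0 :=
      pow_ne_zero _ (ne_of_gt hApos)
    rw [hE₂ δ, hE₁ δ, add_div]
    congr 1
    rw [div_eq_iff hDne]
    have hstep : s ^ (2 * p) * (p * coth ((δ / 2 + 1) * κ) - 1) ^ p
          * (((1 - Real.exp (-2 * κ * (δ - 1))) / 2)
            / ((1 - Real.exp (-κ * δ - 2 * κ)) / 2)) ^ (n - 1)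
          * (κ ^ ((1 : ℝ) - n) * (δ / 2 - 2)
            * ((1 - Real.exp (-κ * δ - 2 * κ)) / 2) ^ (n - 1))
        = s ^ (2 * p) * (p * coth ((δ / 2 + 1) * κ) - 1) ^ p
          * (κ ^ ((1 : ℝ) - n) * (δ / 2 - 2))
          * (((1 - Real.exp (-2 * κ * (δ - 1))) / 2) ^ (n - 1)
            / ((1 - Real.exp (-κ * δ - 2 * κ)) / 2) ^ (n - 1)
            * ((1 - Real.exp (-κ * δ - 2 * κ)) / 2) ^ (n - 1)) := by
      rw [div_pow]; ring
    rw [hstep, div_mul_cancel₀ _ hAne]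
    ring
  -- combine limits
  have hmain : Tendsto (fun δ : ℝ => (M₁ + M₂) / E₁ δ
      + s ^ (2 * p) * (p * coth ((δ / 2 + 1) * κ) - 1) ^ p
        * (((1 - Real.exp (-2 * κ * (δ - 1))) / 2)
          / ((1 - Real.exp (-κ * δ - 2 * κ)) / 2)) ^ (n - 1)) atTop
      (nhds (0 + s ^ (2 * p) * (p - 1) ^ p * (((1 - 0)/2) / ((1 - 0)/2)) ^ (n - 1))) := by
    refine Tendsto.add (tendsto_const_nhds.div_atTop hE₁top) ?_
    exact (tendsto_const_nhds.mul (hClim'.rpow_const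
        (Or.inl (ne_of_gt (by linarith))))).mul
      ((hBlim.div hAlim (by norm_num)).pow _)
  have hlim : Tendsto (fun δ => E₂ δ / E₁ δ) atTop
      (nhds (s ^ (2 * p) * (p - 1) ^ p)) := by
    have heq : (0:ℝ) + s ^ (2 * p) * (p - 1) ^ p
        * ((((1:ℝ) - 0)/2) / (((1:ℝ) - 0)/2)) ^ (n - 1)
        = s ^ (2 * p) * (p - 1) ^ p := by norm_num
    rw [← heq]
    exact hmain.congr' (by filter_upwards [hkey] with δ h using h.symm)
  refine ⟨hlim, ?_⟩
  have h1 : ((n:ℝ) - 1) ^ 2 * (p - 1) * κ ^ 2 / p ^ 2 = s ^ 2 * (p - 1) := by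
    rw [hs]; field_simp
  rw [h1, Real.mul_rpow (by positivity) (by linarith),
    ← Real.rpow_natCast s 2, ← Real.rpow_mul hs0.le]
  norm_num
end

section
/- Let n and p be real numbers with 1 < p < n/2, and let γ be a real number with 2 − n/p < γ < n(p−1)/p. Define f(a,b) = a(p−1)(2(b+1)n − (2+b)²p) + a·p·(2b(p−1) + 4p − n − 2)·γ − a·p²·γ² − (p−1)·a^{p/(p-1)} for a, b > 0. Then for all a, b > 0, f(a,b) ≤ (n/p − 2 + γ)^p·(n(p−1)/p − γ)^p, with equality when a = (n/p − 2 + γ)^{p-1}·(n(p−1)/p − γ)^{p-1} and b = n/p − 2 + γ. -/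
/-- Optimization giving the sharp weighted Rellich constant. -/
theorem stmt_9 (n p γ : ℝ) (hp : 1 < p) (hpn : p < n / 2)
    (hγ₁ : 2 - n / p < γ) (hγ₂ : γ < n * (p - 1) / p) :
    (∀ a b : ℝ, 0 < a → 0 < b →
      a * (p - 1) * (2 * (b + 1) * n - (2 + b) ^ 2 * p)
        + a * p * (2 * b * (p - 1) + 4 * p - n - 2) * γ
        - a * p ^ 2 * γ ^ 2 - (p - 1) * a ^ (p / (p - 1))
      ≤ (n / p - 2 + γ) ^ p * (n * (p - 1) / p - γ) ^ p) ∧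
    ((n / p - 2 + γ) ^ (p - 1) * (n * (p - 1) / p - γ) ^ (p - 1)) * (p - 1)
        * (2 * ((n / p - 2 + γ) + 1) * n - (2 + (n / p - 2 + γ)) ^ 2 * p)
      + ((n / p - 2 + γ) ^ (p - 1) * (n * (p - 1) / p - γ) ^ (p - 1)) * p
        * (2 * (n / p - 2 + γ) * (p - 1) + 4 * p - n - 2) * γ
      - ((n / p - 2 + γ) ^ (p - 1) * (n * (p - 1) / p - γ) ^ (p - 1)) * p ^ 2 * γ ^ 2
      - (p - 1) * ((n / p - 2 + γ) ^ (p - 1) * (n * (p - 1) / p - γ) ^ (p - 1)) ^ (p / (p - 1))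
      = (n / p - 2 + γ) ^ p * (n * (p - 1) / p - γ) ^ p := by
  have hp0 : (0 : ℝ) < p := lt_trans one_pos hp
  have hp1 : p - 1 ≠ 0 := by nlinarith
  set A : ℝ := n / p - 2 + γ with hAdef
  set B : ℝ := n * (p - 1) / p - γ with hBdef
  clear_value A B
  have hA : 0 < A := by simp only [hAdef]; linarith
  have hB : 0 < B := by simp only [hBdef]; linarith
  have hAB : 0 < A * B := mul_pos hA hB
  have hq : p.HolderConjugate (p / (p - 1)) := Real.HolderConjugate.conjExponent hp
  -- the quadratic identity : C(b) = p * (A*B - (p-1)*(b-A)^2)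
  have hquad : ∀ b : ℝ,
      (p - 1) * (2 * (b + 1) * n - (2 + b) ^ 2 * p)
        + p * (2 * b * (p - 1) + 4 * p - n - 2) * γ - p ^ 2 * γ ^ 2
      = p * (A * B - (p - 1) * (b - A) ^ 2) := by
    intro b
    simp only [hAdef, hBdef]
    field_simp
    ring
  -- Young : for a > 0, p*a*(A*B) ≤ (p-1)*a^(p/(p-1)) + (A*B)^p
  have hyoung : ∀ a : ℝ, 0 < a →
      p * (a * (A * B)) ≤ (p - 1) * a ^ (p / (p - 1)) + (A * B) ^ p := by
    intro a ha
    have h := Real.young_inequality_of_nonneg hAB.le ha.le hq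
    have h2 : p * ((A * B) * a) ≤ p * ((A * B) ^ p / p + a ^ (p / (p - 1)) / (p / (p - 1))) :=
      mul_le_mul_of_nonneg_left h hp0.le
    have h3 : p * (a ^ (p / (p - 1)) / (p / (p - 1))) = (p - 1) * a ^ (p / (p - 1)) := by
      field_simp
    have h4 : p * ((A * B) ^ p / p) = (A * B) ^ p := by field_simp
    nlinarith [h2, h3, h4]
  constructor
  · intro a b ha hb
    have key : a * (p - 1) * (2 * (b + 1) * n - (2 + b) ^ 2 * p)
        + a * p * (2 * b * (p - 1) + 4 * p - n - 2) * γ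
        - a * p ^ 2 * γ ^ 2
        = a * (p * (A * B - (p - 1) * (b - A) ^ 2)) := by
      linear_combination a * hquad b
    have hs : (0:ℝ) ≤ (p - 1) * (b - A) ^ 2 :=
      mul_nonneg (by linarith) (sq_nonneg _)
    have h1 : a * (p * (A * B - (p - 1) * (b - A) ^ 2)) ≤ p * (a * (A * B)) := by
      have heq : a * (p * (A * B - (p - 1) * (b - A) ^ 2))
          = p * (a * (A * B)) - a * p * ((p - 1) * (b - A) ^ 2) := by ring
      have h0 : 0 ≤ a * p * ((p - 1) * (b - A) ^ 2) :=
        mul_nonneg (mul_nonneg ha.le hp0.le) hs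
      linarith
    have h2 := hyoung a ha
    have h5 : (A * B) ^ p = A ^ p * B ^ p := Real.mul_rpow hA.le hB.le
    calc a * (p - 1) * (2 * (b + 1) * n - (2 + b) ^ 2 * p)
        + a * p * (2 * b * (p - 1) + 4 * p - n - 2) * γ
        - a * p ^ 2 * γ ^ 2 - (p - 1) * a ^ (p / (p - 1))
        = a * (p * (A * B - (p - 1) * (b - A) ^ 2)) - (p - 1) * a ^ (p / (p - 1)) := by
          linarith [key]
      _ ≤ p * (a * (A * B)) - (p - 1) * a ^ (p / (p - 1)) := by linarith [h1]
      _ ≤ (A * B) ^ p := by linarith [h2]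
      _ = A ^ p * B ^ p := h5
  · -- equality case
    have hpow : A ^ (p - 1) * B ^ (p - 1) = (A * B) ^ (p - 1) :=
      (Real.mul_rpow hA.le hB.le).symm
    have e1 : ((A * B) ^ (p - 1)) ^ (p / (p - 1)) = (A * B) ^ p := by
      rw [← Real.rpow_mul hAB.le]
      congr 1
      field_simp
    have e2 : (A * B) ^ (p - 1) * (A * B) = (A * B) ^ p := by
      rw [← Real.rpow_add_one (ne_of_gt hAB)]
      norm_num
    have hC : (p - 1) * (2 * (A + 1) * n - (2 + A) ^ 2 * p)
        + p * (2 * A * (p - 1) + 4 * p - n - 2) * γ - p ^ 2 * γ ^ 2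
        = p * (A * B) := by
      linear_combination hquad A
    have h5 : (A * B) ^ p = A ^ p * B ^ p := Real.mul_rpow hA.le hB.le
    rw [hpow, e1]
    linear_combination (A * B) ^ (p - 1) * hC + p * e2 + h5
end

section
/- Let n ≥ 5 be a natural number and 1 < p < n/2. Then for all real a, b > 0, (p−1)·a·(2(b+1)n − (2+b)²p) − (p−1)·a^{p/(p−1)} ≤ (n/p − 2)^p·(n(p−1)/p)^p. -/
/-- The γ = 0 (classical) Rellich optimization. -/
theorem stmt_11 (n : ℕ) (hn : 5 ≤ n) (p : ℝ) (hp : 1 < p) (hpn : p < (n : ℝ) / 2) :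
    ∀ a b : ℝ, 0 < a → 0 < b →
      (p - 1) * a * (2 * (b + 1) * (n : ℝ) - (2 + b) ^ 2 * p) - (p - 1) * a ^ (p / (p - 1))
        ≤ ((n : ℝ) / p - 2) ^ p * ((n : ℝ) * (p - 1) / p) ^ p := by
  intro a b ha hb
  have hp0 : (0:ℝ) < p := lt_trans one_pos hp
  have hp1 : (0:ℝ) < p - 1 := sub_pos.2 hp
  set q : ℝ := p / (p - 1) with hqdef
  have hpq : p.HolderConjugate q := (Real.holderConjugate_iff_eq_conjExponent hp).2 rfl
  have hq0 : (0:ℝ) < q := hpq.symm.pos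
  have hn0 : (0:ℝ) < (n:ℝ) := by positivity
  have hc : (0:ℝ) < (n:ℝ) / p - 2 := by
    rw [sub_pos, lt_div_iff₀ hp0]
    linarith [(lt_div_iff₀ (by norm_num : (0:ℝ) < 2)).1 hpn]
  set K : ℝ := (n:ℝ) * ((n:ℝ) / p - 2) with hKdef
  have hK : 0 < K := mul_pos hn0 hc
  -- Step 1: optimize over b
  have hb1 : 2 * (b + 1) * (n:ℝ) - (2 + b) ^ 2 * p ≤ K := by
    have hpK : p * K = (n:ℝ) ^ 2 - 2 * p * (n:ℝ) := by
      rw [hKdef]; field_simp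
    nlinarith [sq_nonneg (b * p - ((n:ℝ) - 2 * p)), hp0]
  -- Step 2: Young's inequality with scaling t = q^(1/q)
  set t : ℝ := q ^ (1 / q) with htdef
  have ht : 0 < t := Real.rpow_pos_of_pos hq0 _
  have htp : t ^ p = q ^ (p - 1) := by
    rw [htdef, ← Real.rpow_mul hq0.le, one_div, inv_mul_eq_div, hpq.div_conj_eq_sub_one]
  have htq : t ^ q = q := by
    rw [htdef, ← Real.rpow_mul hq0.le, one_div, inv_mul_cancel₀ hq0.ne', Real.rpow_one]
  have young : a * K ≤ K ^ p / (q ^ (p - 1) * p) + a ^ q := by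
    have h := Real.young_inequality_of_nonneg (div_nonneg hK.le ht.le)
      (mul_nonneg ha.le ht.le) hpq
    have h1 : K / t * (a * t) = a * K := by field_simp
    have h2 : (K / t) ^ p = K ^ p / (q ^ (p - 1)) := by
      rw [Real.div_rpow hK.le ht.le, htp]
    have h3 : (a * t) ^ q = a ^ q * q := by
      rw [Real.mul_rpow ha.le ht.le, htq]
    rw [h1, h2, h3] at h
    calc a * K ≤ K ^ p / q ^ (p - 1) / p + a ^ q * q / q := h
      _ = K ^ p / (q ^ (p - 1) * p) + a ^ q := by
          rw [div_div, mul_div_assoc, div_self hq0.ne', mul_one]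
  -- combine
  have step1 : (p - 1) * a * (2 * (b + 1) * (n:ℝ) - (2 + b) ^ 2 * p) ≤ (p - 1) * a * K :=
    mul_le_mul_of_nonneg_left hb1 (by positivity)
  have step2 : (p - 1) * (a * K - a ^ q) ≤ (p - 1) * (K ^ p / (q ^ (p - 1) * p)) :=
    mul_le_mul_of_nonneg_left (by linarith) hp1.le
  -- the sharp constant
  have pow_split : ∀ x : ℝ, 0 < x → x ^ p = x ^ (p - 1) * x := by
    intro x hx
    nth_rewrite 3 [← Real.rpow_one x]
    rw [← Real.rpow_add hx, sub_add_cancel]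
  have e1 : K ^ p = (n:ℝ) ^ p * ((n:ℝ) / p - 2) ^ p := by
    rw [hKdef, Real.mul_rpow hn0.le hc.le]
  have e2 : q ^ (p - 1) = p ^ (p - 1) / (p - 1) ^ (p - 1) := by
    rw [hqdef, Real.div_rpow hp0.le hp1.le]
  have e3 : ((n:ℝ) * (p - 1) / p) ^ p = (n:ℝ) ^ p * (p - 1) ^ p / p ^ p := by
    rw [Real.div_rpow (by positivity) hp0.le, Real.mul_rpow hn0.le hp1.le]
  have hpp : (0:ℝ) < p ^ (p - 1) := Real.rpow_pos_of_pos hp0 _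
  have hpp1 : (0:ℝ) < (p - 1) ^ (p - 1) := Real.rpow_pos_of_pos hp1 _
  have eq : (p - 1) * (K ^ p / (q ^ (p - 1) * p))
      = ((n:ℝ) / p - 2) ^ p * ((n:ℝ) * (p - 1) / p) ^ p := by
    rw [e1, e2, e3, pow_split (p - 1) hp1, pow_split p hp0]
    field_simp
  calc (p - 1) * a * (2 * (b + 1) * (n:ℝ) - (2 + b) ^ 2 * p) - (p - 1) * a ^ q
      ≤ (p - 1) * a * K - (p - 1) * a ^ q := by linarith
    _ = (p - 1) * (a * K - a ^ q) := by ring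
    _ ≤ (p - 1) * (K ^ p / (q ^ (p - 1) * p)) := step2
    _ = ((n:ℝ) / p - 2) ^ p * ((n:ℝ) * (p - 1) / p) ^ p := eq
end

section
/- Let n ≥ 5 be a natural number and κ > 0. For t > 0, define L(t) = (n−1)κ·coth(κt), G(t) = (n−1)²κ²/4, and H(t) = (n−1)κ·coth(κt)/2 − 1/(2t). Then for all t > 0, 2(G H)'(t) + 2 G(t) H(t) L(t) − 2 G(t) H(t)² − G(t)² ≥ (n−1)⁴κ⁴/16 + (n−1)²κ²/(8 t²) + (n−1)³(n−3)κ⁴/(8 sinh²(κt)). -/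
/-- Verification of condition (C3) for the improved Rellich-type inequality
on Cartan–Hadamard manifolds with `K ≤ -κ²`. -/
theorem stmt_13 (n : ℕ) (hn : 5 ≤ n) (κ : ℝ) (hκ : 0 < κ)
    (L G H : ℝ → ℝ)
    (hL : ∀ t, L t = ((n : ℝ) - 1) * κ * coth (κ * t))
    (hG : ∀ t, G t = ((n : ℝ) - 1) ^ 2 * κ ^ 2 / 4)
    (hH : ∀ t, H t = ((n : ℝ) - 1) * κ * coth (κ * t) / 2 - 1 / (2 * t)) :
    ∀ t > (0 : ℝ),
      2 * deriv (fun u => G u * H u) t + 2 * G t * H t * L t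
          - 2 * G t * (H t) ^ 2 - (G t) ^ 2
        ≥ ((n : ℝ) - 1) ^ 4 * κ ^ 4 / 16
          + ((n : ℝ) - 1) ^ 2 * κ ^ 2 / (8 * t ^ 2)
          + ((n : ℝ) - 1) ^ 3 * ((n : ℝ) - 3) * κ ^ 4 / (8 * (Real.sinh (κ * t)) ^ 2) := by
  intro t ht
  have hκt : 0 < κ * t := mul_pos hκ ht
  have hs : 0 < Real.sinh (κ * t) := Real.sinh_pos_iff.mpr hκt
  have hsne : Real.sinh (κ * t) ≠ 0 := ne_of_gt hs
  have htne : t ≠ 0 := ne_of_gt ht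
  set s := Real.sinh (κ * t) with hsdef
  set ch := Real.cosh (κ * t) with hchdef
  have hlin : HasDerivAt (fun u : ℝ => κ * u) κ t := by
    simpa using (hasDerivAt_id t).const_mul κ
  have h1 : HasDerivAt (fun u : ℝ => Real.sinh (κ * u)) (ch * κ) t :=
    (Real.hasDerivAt_sinh (κ * t)).comp t hlin
  have h2 : HasDerivAt (fun u : ℝ => Real.cosh (κ * u)) (s * κ) t :=
    (Real.hasDerivAt_cosh (κ * t)).comp t hlin
  have hchsq : ch ^ 2 = s ^ 2 + 1 := Real.cosh_sq (κ * t)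
  have hcoth : HasDerivAt (fun u : ℝ => coth (κ * u)) (-κ / s ^ 2) t := by
    have := h2.div h1 hsne
    have heq : (s * κ * s - ch * (ch * κ)) / s ^ 2 = -κ / s ^ 2 := by
      field_simp
      nlinarith [hchsq]
    rw [heq] at this
    simpa [coth, Pi.div_def] using this
  have h3 : HasDerivAt (fun u : ℝ => 2 * u) 2 t := by
    simpa using (hasDerivAt_id t).const_mul 2
  have h2tne : (2 : ℝ) * t ≠ 0 := by positivity
  have h4 : HasDerivAt (fun u : ℝ => 1 / (2 * u)) (-2 / (2 * t) ^ 2) t := by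
    simpa [one_div, Pi.inv_def] using h3.inv h2tne
  have hHfun : H = fun u : ℝ => ((n : ℝ) - 1) * κ * coth (κ * u) / 2 - 1 / (2 * u) :=
    funext hH
  have hH' : HasDerivAt H
      (((n : ℝ) - 1) * κ * (-κ / s ^ 2) / 2 - -2 / (2 * t) ^ 2) t := by
    rw [hHfun]
    exact ((hcoth.const_mul (((n : ℝ) - 1) * κ)).div_const 2).sub h4
  have hGHfun : (fun u : ℝ => G u * H u)
      = fun u : ℝ => ((n : ℝ) - 1) ^ 2 * κ ^ 2 / 4 * H u := by
    funext u; rw [hG u]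
  have hderiv : deriv (fun u => G u * H u) t
      = ((n : ℝ) - 1) ^ 2 * κ ^ 2 / 4
        * (((n : ℝ) - 1) * κ * (-κ / s ^ 2) / 2 - -2 / (2 * t) ^ 2) := by
    rw [hGHfun]
    exact (hH'.const_mul _).deriv
  rw [hderiv, hG, hH, hL]
  rw [coth]
  rw [ge_iff_le]
  set X := ch / s with hXdef
  have hX : X ^ 2 = 1 + 1 / s ^ 2 := by
    rw [hXdef, div_pow, hchsq]
    field_simp
  have key : 2 * (((n : ℝ) - 1) ^ 2 * κ ^ 2 / 4
        * (((n : ℝ) - 1) * κ * (-κ / s ^ 2) / 2 - -2 / (2 * t) ^ 2))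
      + 2 * (((n : ℝ) - 1) ^ 2 * κ ^ 2 / 4) * (((n : ℝ) - 1) * κ * (ch / s) / 2 - 1 / (2 * t))
          * (((n : ℝ) - 1) * κ * (ch / s))
      - 2 * (((n : ℝ) - 1) ^ 2 * κ ^ 2 / 4)
          * (((n : ℝ) - 1) * κ * (ch / s) / 2 - 1 / (2 * t)) ^ 2
      - (((n : ℝ) - 1) ^ 2 * κ ^ 2 / 4) ^ 2
      = ((n : ℝ) - 1) ^ 4 * κ ^ 4 / 16
          + ((n : ℝ) - 1) ^ 2 * κ ^ 2 / (8 * t ^ 2)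
          + ((n : ℝ) - 1) ^ 3 * ((n : ℝ) - 3) * κ ^ 4 / (8 * s ^ 2) := by
    linear_combination (((n : ℝ) - 1) ^ 4 * κ ^ 4 / 8) * hX
  linarith [key.ge, key.le]
end
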